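/- Let A ⊆ V∖S. If for every vertex b ∈ Bid(S)∖A there is no directed path from b to a vertex of S all of whose vertices lie in V∖A, then there is no hedge formed for Q[S] in G[V∖A]; equivalently, A intersects every hedge formed for Q[S] in G. (Correctness of cutting all directed paths from Bid(S) to S.) -/

import Mathlib

/-- A semi-Markovian graph on vertex type `V`: a DAG of directed edges together with a
symmetric irreflexive relation of bidirected edges. `dir x y` means there is a directed
edge from `x` to `y`, i.e. `x` is a parent of `y`. -/
structure SemiMarkovian (V : Type*) where
  dir : V → V → Prop
  bid : V → V → Prop
  bid_symm : ∀ x y, bid x y → bid y x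
  bid_irrefl : ∀ x, ¬ bid x x
  acyclic : ∀ x, ¬ Relation.TransGen dir x x

namespace SemiMarkovian

variable {V : Type*}

/-- The induced subgraph of `G` on the vertex set `W`. -/
def induce (G : SemiMarkovian V) (W : Set V) : SemiMarkovian V where
  dir a b := a ∈ W ∧ b ∈ W ∧ G.dir a b
  bid a b := a ∈ W ∧ b ∈ W ∧ G.bid a b
  bid_symm := fun x y h => ⟨h.2.1, h.1, G.bid_symm x y h.2.2⟩
  bid_irrefl := fun x h => G.bid_irrefl x h.2.2
  acyclic := fun x h =>
    G.acyclic x (Relation.TransGen.mono (fun _ _ hab => hab.2.2) x x h)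

/-- There is a directed path (possibly of length zero) from `x` to `y` all of whose
vertices lie in `F`. -/
def DirPathIn (G : SemiMarkovian V) (F : Set V) (x y : V) : Prop :=
  x ∈ F ∧ Relation.ReflTransGen (fun a b => b ∈ F ∧ G.dir a b) x y

/-- `x` and `y` are joined by a path of bidirected edges all of whose vertices lie in `F`. -/
def BidConnIn (G : SemiMarkovian V) (F : Set V) (x y : V) : Prop :=
  x ∈ F ∧ Relation.ReflTransGen (fun a b => b ∈ F ∧ G.bid a b) x y

/-- `x` is an ancestor of the set `S` in `G[F]`. -/
def AncestorIn (G : SemiMarkovian V) (F S : Set V) (x : V) : Prop :=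
  ∃ s ∈ S, G.DirPathIn F x s

/-- `G[F]` is a c-component: any two vertices of `F` are joined by a path of bidirected
edges all of whose vertices lie in `F`. -/
def CComponent (G : SemiMarkovian V) (F : Set V) : Prop :=
  ∀ x ∈ F, ∀ y ∈ F, G.BidConnIn F x y

/-- `F` is a hedge formed for `Q[S]` in `G`: `S ⊊ F`, every vertex of `F` is an ancestor of
`S` in `G[F]`, and `G[F]` is a c-component. -/
def IsHedge (G : SemiMarkovian V) (S F : Set V) : Prop :=
  S ⊂ F ∧ (∀ x ∈ F, G.AncestorIn F S x) ∧ G.CComponent F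

/-- The hedge hull of `S` in `G`: the union of `S` with all hedges formed for `Q[S]` in `G`. -/
def Hhull (G : SemiMarkovian V) (S : Set V) : Set V :=
  S ∪ ⋃₀ {F | G.IsHedge S F}

/-- Vertices outside `S` that are parents of some vertex of `S`. -/
def Pa (G : SemiMarkovian V) (S : Set V) : Set V :=
  {x | x ∉ S ∧ ∃ s ∈ S, G.dir x s}

/-- Vertices outside `S` that have a bidirected edge to some vertex of `S`. -/
def Bid (G : SemiMarkovian V) (S : Set V) : Set V :=
  {x | x ∉ S ∧ ∃ s ∈ S, G.bid x s}

/-- `Pa↔(S) := Pa(S) ∩ Bid(S)`. -/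
def PaBid (G : SemiMarkovian V) (S : Set V) : Set V := G.Pa S ∩ G.Bid S

end SemiMarkovian
private lemma rtg_strengthen {V : Type*} {F W : Set V} (hFW : F ⊆ W) {r : V → V → Prop}
    {x y : V} (hx : x ∈ F)
    (h : Relation.ReflTransGen (fun a b => b ∈ F ∧ r a b) x y) :
    Relation.ReflTransGen (fun a b => b ∈ F ∧ (a ∈ W ∧ b ∈ W ∧ r a b)) x y ∧ y ∈ F := by
  induction h with
  | refl => exact ⟨.refl, hx⟩
  | tail h₁ h₂ ih => exact ⟨ih.1.tail ⟨h₂.1, hFW ih.2, hFW h₂.1, h₂.2⟩, h₂.1⟩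

private lemma rtg_crossing {V : Type*} {S F : Set V} {r : V → V → Prop} {x y : V}
    (hx : x ∉ S) (hxF : x ∈ F)
    (h : Relation.ReflTransGen (fun a b => b ∈ F ∧ r a b) x y) :
    y ∈ F ∧ (y ∈ S → ∃ a b, a ∉ S ∧ b ∈ S ∧ a ∈ F ∧ b ∈ F ∧ r a b) := by
  induction h with
  | refl => exact ⟨hxF, fun hy => absurd hy hx⟩
  | tail h₁ h₂ ih =>
    rename_i b c
    refine ⟨h₂.1, fun hc => ?_⟩
    by_cases hb : b ∈ S
    · exact ih.2 hb
    · exact ⟨b, c, hb, hc, ih.1, h₂.1, h₂.2⟩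

/-- If `A ⊆ V∖S` and for every `b ∈ Bid(S)∖A` there is no directed path from
`b` to a vertex of `S` inside `V∖A`, then there is no hedge formed for `Q[S]` in `G[V∖A]`;
equivalently `A` intersects every hedge formed for `Q[S]` in `G`. -/
theorem cut_dir_paths_correct {V : Type*} [Fintype V] (G : SemiMarkovian V) (S A : Set V)
    (hS : G.CComponent S) (hA : A ⊆ Sᶜ)
    (hcut : ∀ b ∈ G.Bid S \ A, ¬ ∃ s ∈ S, G.DirPathIn Aᶜ b s) :
    (¬ ∃ F, (G.induce Aᶜ).IsHedge S F) ∧ ∀ F, G.IsHedge S F → (A ∩ F).Nonempty := by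
  have hSA : S ⊆ Aᶜ := fun s hs ha => hA ha hs
  have main : ¬ ∃ F, (G.induce Aᶜ).IsHedge S F := by
    rintro ⟨F, ⟨hSF, hanc, hcc⟩⟩
    -- F ⊆ Aᶜ
    have hFA : F ⊆ Aᶜ := by
      intro z hz
      obtain ⟨s, hs, hzF, hpath⟩ := hanc z hz
      rcases hpath.cases_head with h | ⟨c, ⟨hcF, hzA, hcA, _⟩, _⟩
      · exact hSA (h ▸ hs)
      · exact hzA
    obtain ⟨x, hxF, hxS⟩ := Set.exists_of_ssubset hSF
    obtain ⟨s, hs, _, _⟩ := hanc x hxF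
    -- bid path from x to s within F gives a crossing edge
    obtain ⟨a, b, haS, hbS, haF, hbF, haA, hbA, hab⟩ :=
      (rtg_crossing hxS hxF (hcc x hxF s (hSF.1 hs)).2).2 hs
    have haBid : a ∈ G.Bid S \ A := ⟨⟨haS, b, hbS, hab⟩, fun h => haA h⟩
    apply hcut a haBid
    obtain ⟨s', hs', _, hpath⟩ := hanc a haF
    exact ⟨s', hs', fun h => haA h, Relation.ReflTransGen.mono (fun u v hv => ⟨hv.2.2.1, hv.2.2.2⟩) _ _ hpath⟩
  refine ⟨main, fun F hF => ?_⟩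
  by_contra hAF
  rw [Set.not_nonempty_iff_eq_empty] at hAF
  have hFA : F ⊆ Aᶜ := fun z hz ha => (Set.eq_empty_iff_forall_notMem.mp hAF z) ⟨ha, hz⟩
  obtain ⟨hSF, hanc, hcc⟩ := hF
  apply main
  refine ⟨F, hSF, fun z hz => ?_, fun u hu v hv => ?_⟩
  · obtain ⟨s, hs, hzF, hpath⟩ := hanc z hz
    exact ⟨s, hs, hzF, (rtg_strengthen hFA hzF hpath).1⟩
  · obtain ⟨huF, hpath⟩ := hcc u hu v hv
    exact ⟨huF, (rtg_strengthen hFA huF hpath).1⟩
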